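/- Let H be a unimodular coFrobenius Hopf algebra with integral φ and Nakayama automorphism N. Then N⁻¹ = S⁻¹ ∘ N ∘ S, and N commutes with S². -/

import Mathlib

/-!
A right integral `φ` satisfies `Σ φ(y c₁) S(c₂) = Σ φ(y₁ c) y₂`: in the convolution algebra,
`f c = Σ φ(y₁ c) y₂` satisfies `f ⋆ id = φ(y ·) 1` by the integral property, so
`f = f ⋆ id ⋆ S = φ(y ·) 1 ⋆ S`. Hence if `φ(H c) = 0`, injectivity of `S` and a basis
expansion of `Δ c` show that the left legs of `Δ c` are again annihilated by `φ`; by the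
Nakayama relation they are annihilated from the right as well, so `Σ c₁ S(c₂) = ε(c) 1` gives
`ε(c) = 0` on all of them and `c = Σ ε(c₁) c₂ = 0`.

With `φ` nondegenerate in this sense, `N S⁻¹ N S = id` is checked against all `φ(y ·)`, using
the Nakayama relation twice together with `φ ∘ S = φ` and antimultiplicativity of `S`; the same
computation with `S` and `S⁻¹` exchanged gives `N S N S⁻¹ = id`, and comparing the two yields
`N S² = S² N`.
-/

open TensorProduct Coalgebra HopfAlgebra

variable {H : Type*} [Ring H] [HopfAlgebra ℂ H]

/-- `φ` is a right integral: `Σ φ(x₁) x₂ = φ(x) 1`. -/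
def IsRightIntegral (φ : H →ₗ[ℂ] ℂ) : Prop :=
  ∀ x : H,
    TensorProduct.lid ℂ H ((LinearMap.rTensor H φ) (Coalgebra.comul (R := ℂ) x)) = φ x • 1

/-- `φ` is a left integral: `Σ x₁ φ(x₂) = φ(x) 1`. -/
def IsLeftIntegral (φ : H →ₗ[ℂ] ℂ) : Prop :=
  ∀ x : H,
    TensorProduct.rid ℂ H ((LinearMap.lTensor H φ) (Coalgebra.comul (R := ℂ) x)) = φ x • 1

open WithConv

noncomputable def Coalgebra.Repr.ofBasisRight {R A κ : Type*} [CommSemiring R] [AddCommMonoid A]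
    [Module R A] [CoalgebraStruct R A] [DecidableEq κ] (b : Module.Basis κ R A) (a : A) :
    Repr R a κ :=
  { index := (equivFinsuppOfBasisRight b (comul a)).support
    left := equivFinsuppOfBasisRight b (comul a)
    right := b
    eq := by
      have := (equivFinsuppOfBasisRight b).symm_apply_apply (comul (R := R) a)
      rwa [equivFinsuppOfBasisRight_symm_apply] at this }

theorem apply_mul_eq_zero_of_forall_apply_mul_eq_zero {R A : Type*} [CommSemiring R]
    [Semiring A] [Module R A] {φ : A →ₗ[R] R} {N : A → A} (hN : Function.Surjective N)
    (hNak : ∀ x y : A, φ (x * y) = φ (y * N x)) {c : A} (hc : ∀ z, φ (z * c) = 0) (w : A) :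
    φ (c * w) = 0 := by
  obtain ⟨z, rfl⟩ := hN w
  rw [← hNak, hc]

namespace IsRightIntegral

variable {φ : H →ₗ[ℂ] ℂ} {N : H →ₗ[ℂ] H}

theorem sum_smul {ι : Type*} {a : H} (hr : IsRightIntegral φ) (ra : Repr ℂ a ι) :
    ∑ i ∈ ra.index, φ (ra.left i) • ra.right i = φ a • 1 := by
  simpa [← ra.eq, map_sum] using hr a

theorem sum_smul_antipode {ι κ : Type*} (hr : IsRightIntegral φ) {y c : H}
    (ry : Repr ℂ y κ) (rc : Repr ℂ c ι) :
    ∑ i ∈ rc.index, φ (y * rc.left i) • antipode ℂ (rc.right i) =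
      ∑ j ∈ ry.index, φ (ry.left j * c) • ry.right j := by
  let f : WithConv (H →ₗ[ℂ] H) :=
    toConv (∑ j ∈ ry.index, (φ ∘ₗ LinearMap.mulLeft ℂ (ry.left j)).smulRight (ry.right j))
  let g : WithConv (H →ₗ[ℂ] H) := toConv ((φ ∘ₗ LinearMap.mulLeft ℂ y).smulRight 1)
  have hfg : f * toConv LinearMap.id = g := by
    ext x
    rw [(ℛ ℂ x).convMul_apply]
    simp only [LinearMap.coe_sum, LinearMap.coe_smulRight, LinearMap.coe_comp,
      Function.comp_apply, LinearMap.mulLeft_apply, Finset.sum_apply, LinearMap.id_coe, id_eq,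
      Finset.sum_mul, smul_mul_assoc, g, f]
    rw [Finset.sum_comm]
    simpa [Finset.sum_product] using hr.sum_smul (ry.mul (ℛ ℂ x))
  have hf : f = g * toConv (antipode ℂ) := by
    rw [← hfg, mul_assoc, LinearMap.id_mul_antipode, mul_one]
  have := congr($hf c)
  rw [rc.convMul_apply] at this
  simpa [f, g, smul_mul_assoc] using this.symm

theorem sum_smul_eq_zero_of_forall_apply_mul_eq_zero {ι : Type*} (hr : IsRightIntegral φ)
    (hS : Function.Injective (antipode ℂ (A := H))) {c : H} (hc : ∀ z, φ (z * c) = 0)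
    (rc : Repr ℂ c ι) (y : H) :
    ∑ i ∈ rc.index, φ (y * rc.left i) • rc.right i = 0 := by
  apply hS
  simp_rw [map_sum, map_smul, map_zero, hr.sum_smul_antipode (ℛ ℂ y) rc, hc, zero_smul,
    Finset.sum_const_zero]

theorem forall_apply_mul_ofBasisRight_left_eq_zero {κ : Type*} [DecidableEq κ]
    (hr : IsRightIntegral φ) (hS : Function.Injective (antipode ℂ (A := H)))
    (b : Module.Basis κ ℂ H) {c : H} (hc : ∀ z, φ (z * c) = 0) :
    ∀ i ∈ (Repr.ofBasisRight b c).index, ∀ z, φ (z * (Repr.ofBasisRight b c).left i) = 0 :=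
  fun i hi z => linearIndependent_iff'.mp b.linearIndependent _ _
    (hr.sum_smul_eq_zero_of_forall_apply_mul_eq_zero hS hc (Repr.ofBasisRight b c) z) i hi

theorem counit_eq_zero_of_forall_apply_mul_eq_zero (hr : IsRightIntegral φ) (hφ : φ ≠ 0)
    (hS : Function.Injective (antipode ℂ (A := H))) (hN : Function.Surjective N)
    (hNak : ∀ x y : H, φ (x * y) = φ (y * N x)) {c : H} (hc : ∀ z, φ (z * c) = 0) :
    counit (R := ℂ) c = 0 := by
  classical
  let rc := Repr.ofBasisRight (Module.Free.chooseBasis ℂ H) c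
  obtain ⟨w, hw⟩ : ∃ w, φ w ≠ 0 := by
    by_contra! h
    exact hφ (LinearMap.ext h)
  have hcw : counit (R := ℂ) c * φ w = 0 := calc
    counit (R := ℂ) c * φ w = φ ((counit (R := ℂ) c • 1) * w) := by simp
    _ = ∑ i ∈ rc.index, φ (rc.left i * (antipode ℂ (rc.right i) * w)) := by
      simp [← sum_mul_antipode_eq_smul rc, Finset.sum_mul, mul_assoc]
    _ = 0 := Finset.sum_eq_zero fun i hi =>
      apply_mul_eq_zero_of_forall_apply_mul_eq_zero hN hNak
        (hr.forall_apply_mul_ofBasisRight_left_eq_zero hS _ hc i hi) _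
  exact (mul_eq_zero.mp hcw).resolve_right hw

theorem eq_zero_of_forall_apply_mul_eq_zero (hr : IsRightIntegral φ) (hφ : φ ≠ 0)
    (hS : Function.Injective (antipode ℂ (A := H))) (hN : Function.Surjective N)
    (hNak : ∀ x y : H, φ (x * y) = φ (y * N x)) {c : H} (hc : ∀ z, φ (z * c) = 0) :
    c = 0 := by
  classical
  let rc := Repr.ofBasisRight (Module.Free.chooseBasis ℂ H) c
  rw [← sum_counit_smul rc]
  refine Finset.sum_eq_zero fun i hi => ?_
  rw [hr.counit_eq_zero_of_forall_apply_mul_eq_zero hφ hS hN hNak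
    (hr.forall_apply_mul_ofBasisRight_left_eq_zero hS _ hc i hi), zero_smul]

end IsRightIntegral

theorem nakayama_apply_conj_nakayama_apply {R A : Type*} [CommRing R] [Ring A] [Module R A]
    {φ : A →ₗ[R] R} {N : A → A} (hφ : ∀ c, (∀ z, φ (z * c) = 0) → c = 0)
    (hNak : ∀ x y : A, φ (x * y) = φ (y * N x)) {σ τ : A → A}
    (hσ : ∀ x y, σ (x * y) = σ y * σ x) (hτ : ∀ x y, τ (x * y) = τ y * τ x)
    (hφσ : ∀ x, φ (σ x) = φ x) (hφτ : ∀ x, φ (τ x) = φ x) (hτσ : ∀ x, τ (σ x) = x) (x : A) :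
    N (τ (N (σ x))) = x := by
  refine sub_eq_zero.mp (hφ _ fun y => ?_)
  rw [mul_sub, map_sub, sub_eq_zero]
  calc φ (y * N (τ (N (σ x)))) = φ (τ (N (σ x)) * y) := (hNak _ _).symm
    _ = φ (τ (σ y * N (σ x))) := by rw [hτ, hτσ]
    _ = φ (σ y * N (σ x)) := hφτ _
    _ = φ (σ x * σ y) := (hNak _ _).symm
    _ = φ (y * x) := by rw [← hσ, hφσ]

theorem nakayama_unimodular_general
    (φ : H →ₗ[ℂ] ℂ) (hr : IsRightIntegral φ) (hφ : φ ≠ 0)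
    (hφS : ∀ x : H, φ (antipode (R := ℂ) x) = φ x)
    (S' : H →ₗ[ℂ] H)
    (hS'l : ∀ x : H, S' (antipode (R := ℂ) x) = x)
    (hS'r : ∀ x : H, antipode (R := ℂ) (S' x) = x)
    (N : H →ₗ[ℂ] H) (hNbij : Function.Bijective N)
    (hNak : ∀ x y : H, φ (x * y) = φ (y * N x)) :
    (∀ x : H, N (S' (N (antipode (R := ℂ) x))) = x) ∧
    (∀ x : H, S' (N (antipode (R := ℂ) (N x))) = x) ∧
    (∀ x : H, N (antipode (R := ℂ) (antipode (R := ℂ) x)) =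
      antipode (R := ℂ) (antipode (R := ℂ) (N x))) := by
  have hS' : ∀ x y : H, S' (x * y) = S' y * S' x := fun x y => by
    rw [← hS'r x, ← hS'r y, ← antipode_mul_antidistrib, hS'l, hS'l, hS'l]
  have hφS' : ∀ x, φ (S' x) = φ x := fun x => by rw [← hφS, hS'r]
  have hnondeg : ∀ c, (∀ z, φ (z * c) = 0) → c = 0 := fun c =>
    hr.eq_zero_of_forall_apply_mul_eq_zero hφ (Function.LeftInverse.injective hS'l) hNbij.2
      hNak
  have hS := antipode_mul_antidistrib (R := ℂ) (A := H)
  have hNS'NS := nakayama_apply_conj_nakayama_apply hnondeg hNak hS hS' hφS hφS' hS'l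
  have hNSNS' := nakayama_apply_conj_nakayama_apply hnondeg hNak hS' hS hφS' hφS hS'r
  refine ⟨hNS'NS, fun x => hNbij.1 (hNS'NS (N x)), fun x => ?_⟩
  calc N (antipode ℂ (antipode ℂ x)) = antipode ℂ (S' (N (antipode ℂ (antipode ℂ x)))) :=
        (hS'r _).symm
    _ = antipode ℂ (antipode ℂ (N (S' (antipode ℂ x)))) := by
        rw [hNbij.1 ((hNS'NS _).trans (hNSNS' _).symm)]
    _ = antipode ℂ (antipode ℂ (N x)) := by rw [hS'l]

/-- for a unimodular coFrobenius Hopf algebra with Nakayama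
automorphism `N`, one has `N⁻¹ = S⁻¹ ∘ N ∘ S`, and `N` commutes with `S²`. -/
theorem nakayama_unimodular
    (φ : H →ₗ[ℂ] ℂ) (hr : IsRightIntegral φ) (hl : IsLeftIntegral φ) (hφ : φ ≠ 0)
    (hφS : ∀ x : H, φ (antipode (R := ℂ) x) = φ x)
    (S' : H →ₗ[ℂ] H)
    (hS'l : ∀ x : H, S' (antipode (R := ℂ) x) = x)
    (hS'r : ∀ x : H, antipode (R := ℂ) (S' x) = x)
    (N : H →ₗ[ℂ] H) (hNbij : Function.Bijective N)
    (hNmul : ∀ x y : H, N (x * y) = N x * N y) (hNone : N 1 = 1)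
    (hNak : ∀ x y : H, φ (x * y) = φ (y * N x))
    (hNformula : ∀ x : H, N x =
      TensorProduct.lid ℂ H
        ((LinearMap.rTensor H ((Coalgebra.counit (R := ℂ)) ∘ₗ N))
          ((LinearMap.lTensor H (S' ∘ₗ S')) (Coalgebra.comul (R := ℂ) x)))) :
    (∀ x : H, N (S' (N (antipode (R := ℂ) x))) = x) ∧
    (∀ x : H, S' (N (antipode (R := ℂ) (N x))) = x) ∧
    (∀ x : H, N (antipode (R := ℂ) (antipode (R := ℂ) x)) =
      antipode (R := ℂ) (antipode (R := ℂ) (N x))) :=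
  nakayama_unimodular_general φ hr hφ hφS S' hS'l hS'r N hNbij hNak
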